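/- Triviality of the intersection: let {V^M_j}_{j∈ℤ} be closed subspaces of L²(ℝ) such that V^M_j ⊂ V^M_{j+1}, and for each j the family {φ^M_{j,k}}_{k∈ℤ} with φ^M_{j,k}(t) = 2^{j/2} φ(2^j t − k) e^{−(i/(2B))(At²+Dp²−Ak²)} is a Riesz basis of V^M_j with uniform bounds 0 < A₁ ≤ A₂ < ∞, where φ ∈ L²(ℝ). Then ⋂_{j∈ℤ} V^M_j = {0}. -/

import Mathlib

/-!
If `f ≠ 0` lies in every `V_j`, the lower Riesz bound gives `A₁‖f‖² ≤ ∑_k |⟨φ_{j,k}, f⟩|²` for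
every `j`. Split `f = g + (f - g)` with `g` vanishing outside some `[-R, R]`. Through the
orthogonal projection onto `V_j` the upper bound holds on all of `L²`, so the `f - g` part
contributes at most `A₂‖f - g‖²`. Since the chirp factor has modulus one, Cauchy–Schwarz and the
substitution `u = 2^j t - k` bound the `g` part by `‖g‖² ∫_{U_j} |φ|²`, where `U_j` is the
closed `2^j R`-neighbourhood of `ℤ`; as `j → -∞` these sets shrink to the null set `ℤ`. Hence
`A₁‖f‖² ≤ 2A₂‖f - g‖²`, and the density of such `g` forces `f = 0`.
-/

open MeasureTheory Complex

/-- The chirped dyadic translate `φ^M_{j,k}(t) = 2^{j/2} φ(2^j t − k) e^{−(i/(2B))(At²+Dp²−Ak²)}`. -/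
noncomputable def chirpDyadic (A B D p : ℝ) (φ : ℝ → ℂ) (j k : ℤ) (t : ℝ) : ℂ :=
  ((2 : ℝ) ^ ((j : ℝ) / 2) : ℝ) * φ ((2 : ℝ) ^ j * t - k) *
    Complex.exp (-(Complex.I / (2 * B)) *
      ((A * t ^ 2 + D * p ^ 2 - A * (k : ℝ) ^ 2 : ℝ) : ℂ))

open Filter Topology Set
open scoped InnerProductSpace ComplexConjugate

section FrameBounds

variable {𝕜 E ι : Type*} [RCLike 𝕜] [NormedAddCommGroup E] [InnerProductSpace 𝕜 E]
  {K : Submodule 𝕜 E} [K.HasOrthogonalProjection] {v : ι → E} {A₁ A₂ : ℝ}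

lemma Submodule.inner_starProjection_right_of_mem {u : E} (hu : u ∈ K) (x : E) :
    ⟪u, K.starProjection x⟫_𝕜 = ⟪u, x⟫_𝕜 := by
  rw [← K.inner_starProjection_left_eq_right, K.starProjection_eq_self_iff.mpr hu]

lemma summable_norm_inner_sq_of_lower_frame_bound (hv : ∀ k, v k ∈ K) (hA₁ : 0 < A₁)
    (hlow : ∀ x ∈ K, A₁ * ‖x‖ ^ 2 ≤ ∑' k, ‖⟪v k, x⟫_𝕜‖ ^ 2) (x : E) :
    Summable fun k ↦ ‖⟪v k, x⟫_𝕜‖ ^ 2 := by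
  simp_rw [← K.inner_starProjection_right_of_mem (hv _) x]
  by_contra hns
  have hy := hlow _ (K.starProjection_apply_mem x)
  rw [tsum_eq_zero_of_not_summable hns] at hy
  have hzero : K.starProjection x = 0 := by simpa using nonpos_of_mul_nonpos_right hy hA₁
  exact hns (by simp [hzero])

lemma tsum_norm_inner_sq_le_of_upper_frame_bound (hv : ∀ k, v k ∈ K) (hA₂ : 0 ≤ A₂)
    (hup : ∀ x ∈ K, ∑' k, ‖⟪v k, x⟫_𝕜‖ ^ 2 ≤ A₂ * ‖x‖ ^ 2) (x : E) :
    ∑' k, ‖⟪v k, x⟫_𝕜‖ ^ 2 ≤ A₂ * ‖x‖ ^ 2 := by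
  simp_rw [← K.inner_starProjection_right_of_mem (hv _) x]
  refine (hup _ (K.starProjection_apply_mem x)).trans ?_
  gcongr
  exact K.norm_starProjection_apply_le x

lemma mul_norm_sq_le_of_frame_bounds (hv : ∀ k, v k ∈ K) (hA₁ : 0 < A₁)
    (hlow : ∀ x ∈ K, A₁ * ‖x‖ ^ 2 ≤ ∑' k, ‖⟪v k, x⟫_𝕜‖ ^ 2) (hA₂ : 0 ≤ A₂)
    (hup : ∀ x ∈ K, ∑' k, ‖⟪v k, x⟫_𝕜‖ ^ 2 ≤ A₂ * ‖x‖ ^ 2) {f : E} (hf : f ∈ K) (g : E) :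
    A₁ * ‖f‖ ^ 2 ≤ 2 * ∑' k, ‖⟪v k, g⟫_𝕜‖ ^ 2 + 2 * (A₂ * ‖f - g‖ ^ 2) := by
  have hsum := summable_norm_inner_sq_of_lower_frame_bound hv hA₁ hlow
  have hsplit (k : ι) : ‖⟪v k, f⟫_𝕜‖ ^ 2 ≤ 2 * ‖⟪v k, g⟫_𝕜‖ ^ 2 + 2 * ‖⟪v k, f - g⟫_𝕜‖ ^ 2 := by
    rw [inner_sub_right]
    calc ‖⟪v k, f⟫_𝕜‖ ^ 2 ≤ (‖⟪v k, g⟫_𝕜‖ + ‖⟪v k, f⟫_𝕜 - ⟪v k, g⟫_𝕜‖) ^ 2 := by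
          gcongr; exact norm_le_insert' _ _
      _ ≤ _ := by linarith [add_sq_le (a := ‖⟪v k, g⟫_𝕜‖) (b := ‖⟪v k, f⟫_𝕜 - ⟪v k, g⟫_𝕜‖)]
  calc A₁ * ‖f‖ ^ 2 ≤ ∑' k, ‖⟪v k, f⟫_𝕜‖ ^ 2 := hlow f hf
    _ ≤ ∑' k, (2 * ‖⟪v k, g⟫_𝕜‖ ^ 2 + 2 * ‖⟪v k, f - g⟫_𝕜‖ ^ 2) :=
        (hsum f).tsum_le_tsum hsplit (((hsum g).mul_left 2).add ((hsum _).mul_left 2))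
    _ = 2 * ∑' k, ‖⟪v k, g⟫_𝕜‖ ^ 2 + 2 * ∑' k, ‖⟪v k, f - g⟫_𝕜‖ ^ 2 := by
        rw [((hsum g).mul_left 2).tsum_add ((hsum _).mul_left 2), tsum_mul_left, tsum_mul_left]
    _ ≤ _ := by gcongr; exact tsum_norm_inner_sq_le_of_upper_frame_bound hv hA₂ hup _

end FrameBounds

namespace MeasureTheory.L2

variable {α : Type*} [MeasurableSpace α] {μ : Measure α}

lemma norm_sq_eq_integral_norm_sq (u : α →₂[μ] ℂ) : ‖u‖ ^ 2 = ∫ t, ‖u t‖ ^ 2 ∂μ := by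
  have h := inner_self_eq_norm_sq_to_K (𝕜 := ℂ) u
  simp_rw [L2.inner_def, inner_self_eq_norm_sq_to_K] at h
  exact_mod_cast h.symm

lemma inner_toLp_eq_integral_mul_conj {v : α → ℂ} (hv : MemLp v 2 μ) (f : α →₂[μ] ℂ) :
    ⟪hv.toLp v, f⟫_ℂ = ∫ t, f t * conj (v t) ∂μ := by
  rw [L2.inner_def]
  refine integral_congr_ae ?_
  filter_upwards [hv.coeFn_toLp] with t ht
  rw [ht, RCLike.inner_apply, mul_comm]

lemma norm_inner_sq_le_of_ae_eq_zero (v g : α →₂[μ] ℂ) {s : Set α} (hs : MeasurableSet s)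
    (hg : ∀ᵐ t ∂μ, t ∉ s → g t = 0) :
    ‖⟪v, g⟫_ℂ‖ ^ 2 ≤ ‖g‖ ^ 2 * ∫ t in s, ‖v t‖ ^ 2 ∂μ := by
  set w := ((Lp.memLp v).indicator hs).toLp (s.indicator v)
  have hw : w =ᵐ[μ] s.indicator v := MemLp.coeFn_toLp _
  have hinner : ⟪v, g⟫_ℂ = ⟪w, g⟫_ℂ := by
    rw [L2.inner_def, L2.inner_def]
    refine integral_congr_ae ?_
    filter_upwards [hg, hw] with t hgt hwt
    by_cases ht : t ∈ s
    · simp [hwt, ht]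
    · simp [hgt ht]
  have hnorm : ‖w‖ ^ 2 = ∫ t in s, ‖v t‖ ^ 2 ∂μ := by
    rw [L2.norm_sq_eq_integral_norm_sq, ← integral_indicator hs]
    refine integral_congr_ae ?_
    filter_upwards [hw] with t hwt
    by_cases ht : t ∈ s <;> simp [hwt, ht]
  calc ‖⟪v, g⟫_ℂ‖ ^ 2 ≤ (‖w‖ * ‖g‖) ^ 2 := by
        rw [hinner]; gcongr; exact norm_inner_le_norm _ _
    _ = _ := by rw [mul_pow, hnorm, mul_comm]

lemma dense_setOf_ae_eq_zero_outside_Icc :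
    Dense {g : ℝ →₂[volume] ℂ | ∃ R, 0 ≤ R ∧ ∀ᵐ t, t ∉ Icc (-R) R → g t = 0} := by
  refine fun f ↦ Metric.mem_closure_iff.mpr fun ε hε ↦ ?_
  obtain ⟨g, hsupp, hle, -, hg⟩ := (Lp.memLp f).exists_hasCompactSupport_eLpNorm_sub_le
    ENNReal.ofNat_ne_top (ENNReal.ofReal_pos.mpr (half_pos hε)).ne'
  obtain ⟨R, hR, hball⟩ := hsupp.isBounded.subset_closedBall_lt 0 0
  refine ⟨hg.toLp g, ⟨R, hR.le, ?_⟩, ?_⟩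
  · filter_upwards [hg.coeFn_toLp] with t ht hout
    rw [ht]
    exact image_eq_zero_of_notMem_tsupport fun h ↦ hout (abs_le.mp (by simpa using hball h))
  · have hsub : f - hg.toLp g = ((Lp.memLp f).sub hg).toLp (⇑f - g) := by
      rw [MemLp.toLp_sub (Lp.memLp f) hg, Lp.toLp_coeFn]
    rw [dist_eq_norm, hsub, Lp.norm_toLp]
    calc (eLpNorm (⇑f - g) 2 volume).toReal ≤ (ENNReal.ofReal (ε / 2)).toReal :=
          ENNReal.toReal_mono ENNReal.ofReal_ne_top hle
      _ < ε := by rw [ENNReal.toReal_ofReal (half_pos hε).le]; linarith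

end MeasureTheory.L2

lemma setIntegral_Icc_comp_mul_sub {f : ℝ → ℝ} {c : ℝ} (hc : 0 < c) (d : ℝ) {a b : ℝ}
    (hab : a ≤ b) :
    ∫ t in Icc a b, c * f (c * t - d) = ∫ u in Icc (c * a - d) (c * b - d), f u := by
  have hab' : c * a - d ≤ c * b - d := by gcongr
  rw [integral_Icc_eq_integral_Ioc, integral_Icc_eq_integral_Ioc,
    ← intervalIntegral.integral_of_le hab, ← intervalIntegral.integral_of_le hab',
    intervalIntegral.integral_const_mul, intervalIntegral.integral_comp_mul_sub _ hc.ne',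
    smul_eq_mul, mul_inv_cancel_left₀ hc.ne']

def intCThickening (w : ℝ) : Set ℝ := ⋃ k : ℤ, Icc ((k : ℝ) - w) (k + w)

lemma measurableSet_intCThickening (w : ℝ) : MeasurableSet (intCThickening w) :=
  MeasurableSet.iUnion fun _ ↦ measurableSet_Icc

lemma abs_sub_round_le_of_mem_intCThickening {u w : ℝ} (hu : u ∈ intCThickening w) :
    |u - round u| ≤ w := by
  obtain ⟨k, hk⟩ := mem_iUnion.mp hu
  exact (round_le u k).trans (abs_sub_le_iff.mpr ⟨by linarith [hk.2], by linarith [hk.1]⟩)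

lemma round_eq_of_mem_Icc {u w : ℝ} (hw : w < 1 / 2) {k : ℤ}
    (hu : u ∈ Icc ((k : ℝ) - w) (k + w)) : round u = k :=
  round_eq_iff.mpr ⟨by linarith [hu.1], by linarith [hu.2]⟩

lemma hasSum_setIntegral_Icc_int {ψ : ℝ → ℝ} (hψ : Integrable ψ) {w : ℝ} (hw : w < 1 / 2) :
    HasSum (fun k : ℤ ↦ ∫ u in Icc ((k : ℝ) - w) (k + w), ψ u) (∫ u in intCThickening w, ψ u) := by
  refine hasSum_integral_iUnion (fun _ ↦ measurableSet_Icc) (fun k l hkl ↦ ?_) hψ.integrableOn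
  refine Set.disjoint_left.mpr fun u hk hl ↦ hkl ?_
  rw [← round_eq_of_mem_Icc hw hk, round_eq_of_mem_Icc hw hl]

lemma tendsto_setIntegral_intCThickening {ψ : ℝ → ℝ} (hψ : Integrable ψ) :
    Tendsto (fun w ↦ ∫ u in intCThickening w, ψ u) (𝓝 0) (𝓝 0) := by
  have hnotInt : ∀ᵐ u ∂volume, u ∉ range ((↑) : ℤ → ℝ) :=
    measure_eq_zero_iff_ae_notMem.mp ((countable_range _).measure_zero _)
  have hpointwise : ∀ᵐ u ∂volume,
      Tendsto (fun w ↦ (intCThickening w).indicator ψ u) (𝓝 0) (𝓝 0) := by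
    filter_upwards [hnotInt] with u hu
    have hpos : 0 < |u - round u| := abs_pos.mpr (sub_ne_zero.mpr fun h ↦ hu ⟨_, h.symm⟩)
    refine tendsto_const_nhds.congr' ?_
    filter_upwards [eventually_lt_nhds hpos] with w hw
    rw [indicator_of_notMem fun h ↦ (abs_sub_round_le_of_mem_intCThickening h).not_gt hw]
  simp_rw [← integral_indicator (measurableSet_intCThickening _)]
  simpa using tendsto_integral_filter_of_dominated_convergence (fun u ↦ ‖ψ u‖)
    (.of_forall fun w ↦ hψ.aestronglyMeasurable.indicator (measurableSet_intCThickening w))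
    (.of_forall fun w ↦ .of_forall fun u ↦ norm_indicator_le_norm_self ψ u) hψ.norm hpointwise

lemma tendsto_two_zpow_atBot : Tendsto (fun j : ℤ ↦ (2 : ℝ) ^ j) atBot (𝓝 0) := by
  refine ((tendsto_rpow_atBot_of_base_gt_one 2 one_lt_two).comp
    (tendsto_intCast_atBot_iff.mpr tendsto_id)).congr fun j ↦ ?_
  exact Real.rpow_intCast 2 j

lemma norm_chirpDyadic (A B D p : ℝ) (φ : ℝ → ℂ) (j k : ℤ) (t : ℝ) :
    ‖chirpDyadic A B D p φ j k t‖ = (2 : ℝ) ^ ((j : ℝ) / 2) * ‖φ ((2 : ℝ) ^ j * t - k)‖ := by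
  rw [chirpDyadic, norm_mul, norm_mul, Complex.norm_exp, Complex.re_mul_ofReal, Complex.norm_real,
    Real.norm_eq_abs, abs_of_pos (by positivity)]
  simp [Complex.div_re]

lemma setIntegral_Icc_norm_chirpDyadic_sq (A B D p : ℝ) (φ : ℝ → ℂ) (j k : ℤ) {a b : ℝ}
    (hab : a ≤ b) :
    ∫ t in Icc a b, ‖chirpDyadic A B D p φ j k t‖ ^ 2 =
      ∫ u in Icc ((2 : ℝ) ^ j * a - k) ((2 : ℝ) ^ j * b - k), ‖φ u‖ ^ 2 := by
  have hscale : ((2 : ℝ) ^ ((j : ℝ) / 2)) ^ 2 = (2 : ℝ) ^ j := by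
    rw [← Real.rpow_natCast, ← Real.rpow_mul zero_le_two, ← Real.rpow_intCast]
    norm_num
  simp_rw [norm_chirpDyadic, mul_pow, hscale]
  exact setIntegral_Icc_comp_mul_sub (f := fun u ↦ ‖φ u‖ ^ 2) (zpow_pos two_pos j) _ hab

lemma tendsto_tsum_norm_inner_chirpDyadic_sq (A B D p : ℝ) {φ : ℝ → ℂ} (hφ : MemLp φ 2)
    (hmem : ∀ j k : ℤ, MemLp (chirpDyadic A B D p φ j k) 2) {g : ℝ →₂[volume] ℂ} {R : ℝ}
    (hR : 0 ≤ R) (hg : ∀ᵐ t, t ∉ Icc (-R) R → g t = 0) :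
    Tendsto (fun j : ℤ ↦ ∑' k : ℤ, ‖⟪(hmem j k).toLp _, g⟫_ℂ‖ ^ 2) atBot (𝓝 0) := by
  set ψ : ℝ → ℝ := fun u ↦ ‖φ u‖ ^ 2
  have hψ : Integrable ψ := (memLp_two_iff_integrable_sq_norm hφ.1).mp hφ
  have hw : Tendsto (fun j : ℤ ↦ (2 : ℝ) ^ j * R) atBot (𝓝 0) := by
    simpa using tendsto_two_zpow_atBot.mul_const R
  have hbound (j k : ℤ) : ‖⟪(hmem j k).toLp _, g⟫_ℂ‖ ^ 2 ≤
      ‖g‖ ^ 2 * ∫ u in Icc (((-k : ℤ) : ℝ) - 2 ^ j * R) ((-k : ℤ) + 2 ^ j * R), ψ u := by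
    refine (L2.norm_inner_sq_le_of_ae_eq_zero _ g measurableSet_Icc hg).trans_eq ?_
    have hchirp : ∫ t in Icc (-R) R, ‖(hmem j k).toLp _ t‖ ^ 2 =
        ∫ t in Icc (-R) R, ‖chirpDyadic A B D p φ j k t‖ ^ 2 :=
      integral_congr_ae <| ae_restrict_of_ae <|
        (hmem j k).coeFn_toLp.mono fun t ht ↦ by simp only [ht]
    rw [hchirp, setIntegral_Icc_norm_chirpDyadic_sq _ _ _ _ _ _ _ (by linarith),
      show (2 : ℝ) ^ j * -R - k = ((-k : ℤ) : ℝ) - 2 ^ j * R by push_cast; ring,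
      show (2 : ℝ) ^ j * R - k = ((-k : ℤ) : ℝ) + 2 ^ j * R by push_cast; ring]
  have hlim := ((tendsto_setIntegral_intCThickening hψ).comp hw).const_mul (‖g‖ ^ 2)
  rw [mul_zero] at hlim
  refine squeeze_zero' (.of_forall fun j ↦ tsum_nonneg fun k ↦ by positivity) ?_ hlim
  filter_upwards [hw.eventually (gt_mem_nhds one_half_pos)] with j hj
  have hsum : HasSum
      (fun k : ℤ ↦ ‖g‖ ^ 2 * ∫ u in Icc (((-k : ℤ) : ℝ) - 2 ^ j * R) ((-k : ℤ) + 2 ^ j * R), ψ u)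
      (‖g‖ ^ 2 * ∫ u in intCThickening (2 ^ j * R), ψ u) :=
    ((Equiv.neg ℤ).hasSum_iff.mpr (hasSum_setIntegral_Icc_int hψ hj)).mul_left _
  exact hasSum_le (hbound j)
    (hsum.summable.of_nonneg_of_le (fun _ ↦ by positivity) (hbound j)).hasSum hsum

theorem saMRA_inter_trivial_general (A B D p : ℝ)
    (φ : ℝ → ℂ) (hφ : MemLp φ 2 (volume : Measure ℝ))
    (V : ℤ → Submodule ℂ (Lp ℂ 2 (volume : Measure ℝ)))
    (hclosed : ∀ j : ℤ, IsClosed (V j : Set (Lp ℂ 2 (volume : Measure ℝ))))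
    (hmem : ∀ j k : ℤ, MemLp (chirpDyadic A B D p φ j k) 2 (volume : Measure ℝ))
    (hbasis : ∀ j k : ℤ, (hmem j k).toLp (chirpDyadic A B D p φ j k) ∈ V j)
    (A₁ A₂ : ℝ) (h₁ : 0 < A₁) (h₁₂ : A₁ ≤ A₂)
    (hframe : ∀ j : ℤ, ∀ f ∈ V j,
      A₁ * ‖f‖ ^ 2 ≤
          (∑' k : ℤ, ‖∫ t : ℝ, f t * (starRingEnd ℂ) (chirpDyadic A B D p φ j k t)‖ ^ 2) ∧
        (∑' k : ℤ, ‖∫ t : ℝ, f t * (starRingEnd ℂ) (chirpDyadic A B D p φ j k t)‖ ^ 2) ≤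
          A₂ * ‖f‖ ^ 2) :
    (⋂ j : ℤ, (V j : Set (Lp ℂ 2 (volume : Measure ℝ)))) = {0} := by
  refine eq_singleton_iff_unique_mem.mpr ⟨mem_iInter.mpr fun j ↦ (V j).zero_mem, fun f hf ↦ ?_⟩
  simp_rw [← L2.inner_toLp_eq_integral_mul_conj (hmem _ _)] at hframe
  have hkey : ∀ g ∈ {g : ℝ →₂[volume] ℂ | ∃ R, 0 ≤ R ∧ ∀ᵐ t, t ∉ Icc (-R) R → g t = 0},
      A₁ * ‖f‖ ^ 2 ≤ 2 * (A₂ * ‖f - g‖ ^ 2) := by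
    rintro g ⟨R, hR, hg⟩
    have hlim := ((tendsto_tsum_norm_inner_chirpDyadic_sq A B D p hφ hmem hR hg).const_mul
      2).add_const (2 * (A₂ * ‖f - g‖ ^ 2))
    rw [mul_zero, zero_add] at hlim
    refine ge_of_tendsto hlim (.of_forall fun j ↦ ?_)
    have : CompleteSpace (V j) := (hclosed j).completeSpace_coe
    exact mul_norm_sq_le_of_frame_bounds (hbasis j) h₁ (fun x hx ↦ (hframe j x hx).1)
      (h₁.le.trans h₁₂) (fun x hx ↦ (hframe j x hx).2) (mem_iInter.mp hf j) g
  have hclosedSet : IsClosed {g : ℝ →₂[volume] ℂ | A₁ * ‖f‖ ^ 2 ≤ 2 * (A₂ * ‖f - g‖ ^ 2)} :=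
    isClosed_le continuous_const (by fun_prop)
  have hf0 : A₁ * ‖f‖ ^ 2 ≤ 2 * (A₂ * ‖f - f‖ ^ 2) :=
    hclosedSet.closure_subset_iff.mpr hkey (L2.dense_setOf_ae_eq_zero_outside_Icc f)
  rw [sub_self, norm_zero, zero_pow two_ne_zero, mul_zero, mul_zero] at hf0
  simpa using nonpos_of_mul_nonpos_right hf0 h₁

/-- Triviality of the intersection in a special affine multi-resolution analysis:
if each `V^M_j` is a closed subspace of `L²(ℝ)` admitting `{φ^M_{j,k}}_k` as a Riesz basis
with uniform bounds, and `V^M_j ⊆ V^M_{j+1}`, then `⋂_j V^M_j = {0}`. -/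
theorem saMRA_inter_trivial (A B C D p q : ℝ) (hB : B ≠ 0)
    (φ : ℝ → ℂ) (hφ : MemLp φ 2 (volume : Measure ℝ))
    (V : ℤ → Submodule ℂ (Lp ℂ 2 (volume : Measure ℝ)))
    (hclosed : ∀ j : ℤ, IsClosed (V j : Set (Lp ℂ 2 (volume : Measure ℝ))))
    (hmono : ∀ j : ℤ, V j ≤ V (j + 1))
    (hmem : ∀ j k : ℤ, MemLp (chirpDyadic A B D p φ j k) 2 (volume : Measure ℝ))
    (hbasis : ∀ j k : ℤ, (hmem j k).toLp (chirpDyadic A B D p φ j k) ∈ V j)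
    (A₁ A₂ : ℝ) (h₁ : 0 < A₁) (h₁₂ : A₁ ≤ A₂)
    (hframe : ∀ j : ℤ, ∀ f ∈ V j,
      A₁ * ‖f‖ ^ 2 ≤
          (∑' k : ℤ, ‖∫ t : ℝ, f t * (starRingEnd ℂ) (chirpDyadic A B D p φ j k t)‖ ^ 2) ∧
        (∑' k : ℤ, ‖∫ t : ℝ, f t * (starRingEnd ℂ) (chirpDyadic A B D p φ j k t)‖ ^ 2) ≤
          A₂ * ‖f‖ ^ 2) :
    (⋂ j : ℤ, (V j : Set (Lp ℂ 2 (volume : Measure ℝ)))) = {0} :=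
  saMRA_inter_trivial_general A B D p φ hφ V hclosed hmem hbasis A₁ A₂ h₁ h₁₂ hframe
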